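/- For any integer m ≥ 2 and any irrational x ∈ (0,1), the convergents pₙ/qₙ of the base-m Chan continued fraction expansion of x converge to x: lim_{n→∞} pₙ(x)/qₙ(x) = x. -/

import Mathlib

/-- The Chan shift transformation `T_m`. -/
noncomputable def chanT (m : ℕ) (x : ℝ) : ℝ :=
  if x = 0 then 0
  else ((m:ℝ) ^ (Int.fract (Real.log (1/x) / Real.log m)) - 1) / ((m:ℝ) - 1)

/-- The first digit `a₁(x) = ⌊log(1/x)/log m⌋`. -/
noncomputable def chanA (m : ℕ) (x : ℝ) : ℤ := ⌊Real.log (1/x) / Real.log m⌋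

/-!
Put `y n = T_m^[n] x`. The identity `m ^ a (n+1) * y n * (1 + (m - 1) * y (n+1)) = 1` turns the
recurrence into `x q (n+1) - p (n+1) = -(m - 1) m ^ a (n+1) y (n+1) (x q n - p n)`, so the errors of
consecutive convergents have opposite signs and `x` lies between them. The gap between consecutive
convergents shrinks at least by the factor `(m - 1) / m` at each step, because
`q (n+2) ≥ q (n+1) + (m - 1) m ^ a (n+1) q n ≥ m · m ^ a (n+1) q n`.
-/

open Set Filter Topology

section ChanMap

variable {m : ℕ} {y : ℝ}

lemma chanA_nonneg (hy0 : 0 < y) (hy1 : y ≤ 1) : 0 ≤ chanA m y :=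
  Int.floor_nonneg.mpr <|
    div_nonneg (Real.log_nonneg (one_le_one_div hy0 hy1)) (Real.log_natCast_nonneg m)

lemma one_add_mul_chanT (hm : 1 < m) (hy : y ≠ 0) :
    1 + ((m : ℝ) - 1) * chanT m y = (m : ℝ) ^ Int.fract (Real.logb m (1 / y)) := by
  have hm1 : (m : ℝ) - 1 ≠ 0 := sub_ne_zero.mpr (by exact_mod_cast hm.ne')
  rw [chanT, if_neg hy, Real.log_div_log]
  field_simp
  ring

lemma zpow_chanA_mul_mul_one_add_chanT (hm : 1 < m) (hy : 0 < y) :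
    (m : ℝ) ^ chanA m y * y * (1 + ((m : ℝ) - 1) * chanT m y) = 1 := by
  have hm1 : (1 : ℝ) < m := by exact_mod_cast hm
  rw [one_add_mul_chanT hm hy.ne', chanA, Real.log_div_log, ← Real.rpow_intCast, mul_right_comm,
    ← Real.rpow_add (by positivity), Int.floor_add_fract,
    Real.rpow_logb (by positivity) hm1.ne' (by positivity)]
  field_simp

lemma irrational_chanT (hm : 1 < m) (hy : 0 < y) (hirr : Irrational y) :
    Irrational (chanT m y) := by
  have hm1 : (1 : ℚ) < m := by exact_mod_cast hm
  have h := zpow_chanA_mul_mul_one_add_chanT hm hy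
  have hT : chanT m y =
      (((((m : ℚ) ^ chanA m y : ℚ) : ℝ) * y)⁻¹ - (1 : ℚ)) / (((m : ℚ) - 1 : ℚ) : ℝ) := by
    have : (m : ℝ) - 1 ≠ 0 := by exact_mod_cast (sub_pos.mpr hm1).ne'
    push_cast
    rw [← eq_inv_of_mul_eq_one_right h]
    field_simp
    ring
  rw [hT]
  exact ((hirr.ratCast_mul (by positivity)).inv.sub_ratCast 1).div_ratCast (sub_pos.mpr hm1).ne'

lemma chanT_mem_Ioo (hm : 1 < m) (hy : 0 < y) (hirr : Irrational y) :
    chanT m y ∈ Ioo 0 1 := by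
  have hm1 : (1 : ℝ) < m := by exact_mod_cast hm
  have h := one_add_mul_chanT hm hy.ne'
  have hfract_lt := Real.rpow_lt_rpow_of_exponent_lt hm1 (Int.fract_lt_one (Real.logb m (1 / y)))
  have hfract_ge := Real.one_le_rpow hm1.le (Int.fract_nonneg (Real.logb m (1 / y)))
  rw [Real.rpow_one] at hfract_lt
  refine ⟨lt_of_le_of_ne ?_ (irrational_chanT hm hy hirr).ne_zero.symm, ?_⟩ <;> nlinarith

lemma mapsTo_chanT (hm : 1 < m) :
    MapsTo (chanT m) {y | y ∈ Ioo 0 1 ∧ Irrational y} {y | y ∈ Ioo 0 1 ∧ Irrational y} :=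
  fun _ ⟨hy, hirr⟩ => ⟨chanT_mem_Ioo hm hy.1 hirr, irrational_chanT hm hy.1 hirr⟩

end ChanMap

/-- The recurrence of `pₙ` and `qₙ`, indexed from `n + 2` to avoid truncated subtraction. -/
def ChanRecurrence (m : ℝ) (a : ℕ → ℤ) (u : ℕ → ℝ) : Prop :=
  ∀ n, u (n + 2) = m ^ a (n + 2) * u (n + 1) + (m - 1) * m ^ a (n + 1) * u n

lemma abs_le_abs_sub_of_mul_nonpos {α : Type*} [CommRing α] [LinearOrder α]
    [IsStrictOrderedRing α] {u v : α} (h : u * v ≤ 0) : |u| ≤ |u - v| :=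
  sq_le_sq.mp (by nlinarith [sq_nonneg v])

namespace ChanRecurrence

variable {m : ℝ} {a : ℕ → ℤ} {p q y : ℕ → ℝ}

lemma pos (hq : ChanRecurrence m a q) (hm : 1 ≤ m) (hq0 : 0 < q 0) (hq1 : q 1 = m ^ a 1 * q 0)
    (n : ℕ) : 0 < q n := by
  have hm0 : 0 < m := by linarith
  have hm1 : 0 ≤ m - 1 := by linarith
  induction n using Nat.twoStepInduction with
  | zero => exact hq0
  | one => rw [hq1]; positivity
  | more n _ _ => rw [hq n]; positivity

lemma zpow_mul_le (hq : ChanRecurrence m a q) (hm : 1 ≤ m) (hq0 : 0 < q 0)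
    (hq1 : q 1 = m ^ a 1 * q 0) (n : ℕ) : m ^ a (n + 1) * q n ≤ q (n + 1) := by
  cases n with
  | zero => exact hq1.ge
  | succ n =>
    have hm0 : 0 < m := by linarith
    have hm1 : 0 ≤ m - 1 := by linarith
    have := hq.pos hm hq0 hq1 n
    rw [hq n]
    exact le_add_of_nonneg_right (by positivity)

lemma mul_zpow_mul_le (hq : ChanRecurrence m a q) (hm : 1 ≤ m) (ha : ∀ n, 0 ≤ a (n + 1))
    (hq0 : 0 < q 0) (hq1 : q 1 = m ^ a 1 * q 0) (n : ℕ) :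
    m * m ^ a (n + 1) * q n ≤ q (n + 2) := by
  have h1 : 1 ≤ m ^ a (n + 2) := one_le_zpow₀ hm (ha (n + 1))
  have h2 := hq.zpow_mul_le hm hq0 hq1 n
  have h3 := hq.pos hm hq0 hq1 (n + 1)
  rw [hq n]
  nlinarith

lemma sub_convergents_succ (hp : ChanRecurrence m a p) (hq : ChanRecurrence m a q)
    (hq_ne : ∀ n, q n ≠ 0) (n : ℕ) :
    p (n + 2) / q (n + 2) - p (n + 1) / q (n + 1) =
      -((m - 1) * m ^ a (n + 1) * q n / q (n + 2)) * (p (n + 1) / q (n + 1) - p n / q n) := by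
  have h0 := hq_ne n
  have h1 := hq_ne (n + 1)
  have h2 := hq_ne (n + 2)
  field_simp
  rw [hp n, hq n]
  ring

lemma abs_sub_convergents_le (hp : ChanRecurrence m a p) (hq : ChanRecurrence m a q)
    (hm : 1 ≤ m) (ha : ∀ n, 0 ≤ a (n + 1)) (hq0 : 0 < q 0) (hq1 : q 1 = m ^ a 1 * q 0) (n : ℕ) :
    |p (n + 1) / q (n + 1) - p n / q n| ≤ ((m - 1) / m) ^ n * |p 1 / q 1 - p 0 / q 0| := by
  have hm0 : 0 < m := by linarith
  have hm1 : 0 ≤ m - 1 := by linarith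
  have hq_pos := hq.pos hm hq0 hq1
  refine le_geom (u := fun n => |p (n + 1) / q (n + 1) - p n / q n|) (by positivity) n
    fun k _ => ?_
  have hratio : (m - 1) * m ^ a (k + 1) * q k / q (k + 2) ≤ (m - 1) / m := by
    rw [div_le_div_iff₀ (hq_pos _) hm0]
    nlinarith [hq.mul_zpow_mul_le hm ha hq0 hq1 k]
  have := hq_pos k
  have := hq_pos (k + 2)
  rw [hp.sub_convergents_succ hq (fun n => (hq_pos n).ne') k, abs_mul, abs_neg,
    abs_of_nonneg (by positivity)]
  gcongr

lemma approx_error_succ (hp : ChanRecurrence m a p) (hq : ChanRecurrence m a q)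
    (hy : ∀ n, m ^ a (n + 1) * y n * (1 + (m - 1) * y (n + 1)) = 1)
    (hp0 : p 0 = 0) (hp1 : p 1 = 1) (hq0 : q 0 = 1) (hq1 : q 1 = m ^ a 1 * q 0) (n : ℕ) :
    y 0 * q (n + 1) - p (n + 1) = -((m - 1) * m ^ a (n + 1) * y (n + 1)) * (y 0 * q n - p n) := by
  induction n with
  | zero =>
    rw [hq1, hq0, hp1, hp0]
    linear_combination hy 0
  | succ n ih =>
    show y 0 * q (n + 2) - p (n + 2) =
      -((m - 1) * m ^ a (n + 2) * y (n + 2)) * (y 0 * q (n + 1) - p (n + 1))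
    rw [hp n, hq n]
    linear_combination (m ^ a (n + 2) * (1 + (m - 1) * y (n + 2))) * ih
      - ((m - 1) * m ^ a (n + 1) * (y 0 * q n - p n)) * hy (n + 1)

lemma abs_sub_le_abs_sub_convergents (hp : ChanRecurrence m a p) (hq : ChanRecurrence m a q)
    (hm : 1 ≤ m) (hy : ∀ n, m ^ a (n + 1) * y n * (1 + (m - 1) * y (n + 1)) = 1)
    (hy_nonneg : ∀ n, 0 ≤ y (n + 1))
    (hp0 : p 0 = 0) (hp1 : p 1 = 1) (hq0 : q 0 = 1) (hq1 : q 1 = m ^ a 1 * q 0) (n : ℕ) :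
    |y 0 - p n / q n| ≤ |p (n + 1) / q (n + 1) - p n / q n| := by
  have hm0 : 0 < m := by linarith
  have hm1 : 0 ≤ m - 1 := by linarith
  have hq_pos := hq.pos hm (hq0 ▸ one_pos) hq1
  have hqn := hq_pos n
  have hqn1 := hq_pos (n + 1)
  have hyn1 := hy_nonneg n
  have ht : 0 ≤ (m - 1) * m ^ a (n + 1) * y (n + 1) := by positivity
  have hsign : (y 0 - p n / q n) * (y 0 - p (n + 1) / q (n + 1)) ≤ 0 := by
    rw [sub_div' hqn.ne', sub_div' hqn1.ne', div_mul_div_comm,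
      hp.approx_error_succ hq hy hp0 hp1 hq0 hq1 n]
    exact div_nonpos_of_nonpos_of_nonneg
      (by nlinarith [mul_nonneg ht (mul_self_nonneg (y 0 * q n - p n))]) (by positivity)
  simpa using abs_le_abs_sub_of_mul_nonpos hsign

lemma tendsto_convergents (hp : ChanRecurrence m a p) (hq : ChanRecurrence m a q)
    (hm : 1 ≤ m) (ha : ∀ n, 0 ≤ a (n + 1))
    (hy : ∀ n, m ^ a (n + 1) * y n * (1 + (m - 1) * y (n + 1)) = 1)
    (hy_nonneg : ∀ n, 0 ≤ y (n + 1))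
    (hp0 : p 0 = 0) (hp1 : p 1 = 1) (hq0 : q 0 = 1) (hq1 : q 1 = m ^ a 1 * q 0) :
    Tendsto (fun n => p n / q n) atTop (𝓝 (y 0)) := by
  have hm0 : 0 < m := by linarith
  have hgeom : Tendsto (fun n => ((m - 1) / m) ^ n * |p 1 / q 1 - p 0 / q 0|) atTop (𝓝 0) := by
    simpa using (tendsto_pow_atTop_nhds_zero_of_lt_one (by positivity)
      ((div_lt_one hm0).mpr (by linarith))).mul_const |p 1 / q 1 - p 0 / q 0|
  rw [tendsto_iff_norm_sub_tendsto_zero]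
  refine squeeze_zero (fun _ => norm_nonneg _) (fun n => ?_) hgeom
  rw [Real.norm_eq_abs, abs_sub_comm]
  exact (hp.abs_sub_le_abs_sub_convergents hq hm hy hy_nonneg hp0 hp1 hq0 hq1 n).trans
    (hp.abs_sub_convergents_le hq hm ha (hq0 ▸ one_pos) hq1 n)

end ChanRecurrence

theorem chan_convergents_tendsto_general (m : ℕ) (hm : 2 ≤ m) (x : ℝ)
    (hx : x ∈ Set.Ioo (0:ℝ) 1) (hirr : Irrational x)
    (a : ℕ → ℤ)
    (ha : ∀ n, 1 ≤ n → a n = chanA m ((chanT m)^[n-1] x))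
    (p q : ℕ → ℝ) (hp0 : p 0 = 0) (hp1 : p 1 = 1) (hq0 : q 0 = 1)
    (hq1 : q 1 = (m:ℝ) ^ (a 1) * q 0)
    (hp : ∀ n, 2 ≤ n →
      p n = (m:ℝ) ^ (a n) * p (n-1) + ((m:ℝ) - 1) * (m:ℝ) ^ (a (n-1)) * p (n-2))
    (hq : ∀ n, 2 ≤ n →
      q n = (m:ℝ) ^ (a n) * q (n-1) + ((m:ℝ) - 1) * (m:ℝ) ^ (a (n-1)) * q (n-2)) :
    Filter.Tendsto (fun n => p n / q n) Filter.atTop (nhds x) := by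
  set y : ℕ → ℝ := fun n => (chanT m)^[n] x
  have hy (n : ℕ) : y n ∈ Ioo 0 1 ∧ Irrational (y n) := (mapsTo_chanT hm).iterate n ⟨hx, hirr⟩
  have hy_succ (n : ℕ) : y (n + 1) = chanT m (y n) := Function.iterate_succ_apply' _ _ _
  have ha_succ (n : ℕ) : a (n + 1) = chanA m (y n) := ha (n + 1) n.succ_pos
  refine ChanRecurrence.tendsto_convergents (y := y) (fun n => hp (n + 2) (by omega))
    (fun n => hq (n + 2) (by omega)) (by exact_mod_cast one_le_two.trans hm)
    (fun n => ha_succ n ▸ chanA_nonneg (hy n).1.1 (hy n).1.2.le) (fun n => ?_)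
    (fun n => (hy (n + 1)).1.1.le) hp0 hp1 hq0 hq1
  rw [ha_succ, hy_succ]
  exact zpow_chanA_mul_mul_one_add_chanT hm (hy n).1.1

theorem chan_convergents_tendsto (m : ℕ) (hm : 2 ≤ m) (x : ℝ)
    (hx : x ∈ Set.Ioo (0:ℝ) 1) (hirr : Irrational x)
    (a : ℕ → ℤ) (ha0 : a 0 = 0)
    (ha : ∀ n, 1 ≤ n → a n = chanA m ((chanT m)^[n-1] x))
    (p q : ℕ → ℝ) (hp0 : p 0 = 0) (hp1 : p 1 = 1) (hq0 : q 0 = 1)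
    (hq1 : q 1 = (m:ℝ) ^ (a 1) * q 0)
    (hp : ∀ n, 2 ≤ n →
      p n = (m:ℝ) ^ (a n) * p (n-1) + ((m:ℝ) - 1) * (m:ℝ) ^ (a (n-1)) * p (n-2))
    (hq : ∀ n, 2 ≤ n →
      q n = (m:ℝ) ^ (a n) * q (n-1) + ((m:ℝ) - 1) * (m:ℝ) ^ (a (n-1)) * q (n-2)) :
    Filter.Tendsto (fun n => p n / q n) Filter.atTop (nhds x) :=
  chan_convergents_tendsto_general m hm x hx hirr a ha p q hp0 hp1 hq0 hq1 hp hq
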